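/- In the saddle-point setting with inexact preconditioning, where M_U = [[F, Bᵀ],[0, H2]], M̃_U = [[P₁, Bᵀ],[0, H2]], P₁ ∈ ℝ^{n×n} is nonsingular, ‖P₁⁻¹F − I‖_{H1} ≤ C₃η, and H = blockdiag(H1, H2), one has ‖H(M̃_U⁻¹K) − (M̃_U⁻¹K)ᵀH‖_{H,H⁻¹} ≤ ‖H(M_U⁻¹K) − (M_U⁻¹K)ᵀH‖_{H,H⁻¹} + 2 C₃ η ‖M_U⁻¹K‖_H. -/

import Mathlib

/-!
For symmetric positive definite `H1`, `H2`, the weighted norm `‖M‖_{H1,H2}` is the spectral norm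
of `√H2 * M * √H1⁻¹`. Hence it is subadditive and submultiplicative, and with `S = √H` one gets
`S⁻¹ (H A - Aᵀ H) S⁻¹ = S A S⁻¹ - (S A S⁻¹)ᵀ`, so `‖H A - Aᵀ H‖_{H,H⁻¹} ≤ 2 ‖A‖_H`.

Since `M̃_U⁻¹ M_U = blockdiag(P₁⁻¹ F, I)`, the preconditioned operator is
`M̃_U⁻¹ K = (I + D) M_U⁻¹ K` with `D = blockdiag(P₁⁻¹ F - I, 0)`, and `‖D‖_H ≤ ‖P₁⁻¹ F - I‖_{H1}`.
Splitting the commutator of `(I + D) M_U⁻¹ K` accordingly gives the bound.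
-/
open Matrix

/-- The `H`-norm of a vector: `‖u‖_H = (uᵀ H u)^{1/2}`. -/
noncomputable def vnorm {α : Type*} [Fintype α] (H : Matrix α α ℝ) (u : α → ℝ) : ℝ :=
  Real.sqrt (u ⬝ᵥ (H *ᵥ u))

/-- The weighted operator norm `‖M‖_{H1,H2} = sup_{v ≠ 0} ‖M v‖_{H2} / ‖v‖_{H1}`.
For a square matrix, `‖M‖_H = wnorm H H M`; the spectral norm is `wnorm 1 1 M`. -/
noncomputable def wnorm {α β : Type*} [Fintype α] [Fintype β]
    (H1 : Matrix α α ℝ) (H2 : Matrix β β ℝ) (M : Matrix β α ℝ) : ℝ :=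
  sSup {r : ℝ | ∃ v : α → ℝ, v ≠ 0 ∧ r = vnorm H2 (M *ᵥ v) / vnorm H1 v}

open scoped Matrix.Norms.L2Operator MatrixOrder

theorem ContinuousLinearMap.opNorm_eq_sSup_div {E F : Type*} [NormedAddCommGroup E]
    [NormedSpace ℝ E] [NormedAddCommGroup F] [NormedSpace ℝ F] (f : E →L[ℝ] F) :
    ‖f‖ = sSup {r : ℝ | ∃ x : E, x ≠ 0 ∧ r = ‖f x‖ / ‖x‖} := by
  have hle : ∀ r ∈ {r : ℝ | ∃ x : E, x ≠ 0 ∧ r = ‖f x‖ / ‖x‖}, r ≤ ‖f‖ := by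
    rintro r ⟨x, -, rfl⟩
    exact f.ratio_le_opNorm x
  refine le_antisymm (f.opNorm_le_bound (Real.sSup_nonneg ?_) fun x ↦ ?_)
    (Real.sSup_le hle (norm_nonneg _))
  · rintro r ⟨x, -, rfl⟩
    positivity
  · rcases eq_or_ne x 0 with rfl | hx
    · simp
    · rw [← div_le_iff₀ (norm_pos_iff.mpr hx)]
      exact le_csSup ⟨‖f‖, hle⟩ ⟨x, hx, rfl⟩

namespace Matrix

variable {α β γ : Type*} [Fintype α] [Fintype β] [Fintype γ]

theorem wnorm_nonneg (H1 : Matrix α α ℝ) (H2 : Matrix β β ℝ) (M : Matrix β α ℝ) :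
    0 ≤ wnorm H1 H2 M :=
  Real.sSup_nonneg <| by
    rintro r ⟨v, -, rfl⟩
    exact div_nonneg (Real.sqrt_nonneg _) (Real.sqrt_nonneg _)

theorem vnorm_fromBlocks_sumElim (H1 : Matrix α α ℝ) (H2 : Matrix β β ℝ) (a : α → ℝ)
    (b : β → ℝ) :
    vnorm (fromBlocks H1 0 0 H2) (Sum.elim a b) = √(a ⬝ᵥ H1 *ᵥ a + b ⬝ᵥ H2 *ᵥ b) := by
  simp [vnorm, fromBlocks_mulVec, sumElim_dotProduct_sumElim]

variable [DecidableEq α] [DecidableEq β] [DecidableEq γ]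

theorem inv_fromBlocks_zero₂₁_mul_fromBlocks_zero₂₁ {R : Type*} [CommRing R]
    {P F : Matrix α α R} (B : Matrix α β R) {D : Matrix β β R} (hP : IsUnit P.det)
    (hD : IsUnit D.det) :
    (fromBlocks P B 0 D)⁻¹ * fromBlocks F B 0 D = fromBlocks (P⁻¹ * F) 0 0 1 := by
  rw [inv_fromBlocks_zero₂₁_of_isUnit_iff _ _ _ (iff_of_true ((isUnit_iff_isUnit_det P).mpr hP)
    ((isUnit_iff_isUnit_det D).mpr hD)), fromBlocks_multiply]
  simp [Matrix.mul_assoc, nonsing_inv_mul _ hD]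

theorem transpose_sqrt (H : Matrix α α ℝ) : (CFC.sqrt H)ᵀ = CFC.sqrt H := by
  rw [← conjTranspose_eq_transpose_of_trivial]
  exact (CFC.sqrt_nonneg H).posSemidef.isHermitian.eq

theorem PosDef.isUnit_det_sqrt {H : Matrix α α ℝ} (hH : H.PosDef) :
    IsUnit (CFC.sqrt H).det :=
  (isUnit_iff_isUnit_det _).mp <| (CFC.isUnit_sqrt_iff H hH.posSemidef.nonneg).mpr hH.isUnit

theorem PosDef.fromBlocks_zero {A : Matrix α α ℝ} {D : Matrix β β ℝ} (hA : A.PosDef)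
    (hD : D.PosDef) : (fromBlocks A 0 0 D).PosDef := by
  have := hA.isUnit.invertible
  have hsemi : (fromBlocks A 0 0 D).PosSemidef := by
    simpa using (PosDef.fromBlocks₁₁ 0 D hA).mpr (by simpa using hD.posSemidef)
  rw [hsemi.posDef_iff_det_ne_zero, det_fromBlocks_zero₂₁]
  exact mul_ne_zero hA.det_pos.ne' hD.det_pos.ne'

theorem isUnit_det_of_posDef_smul_add_transpose {F : Matrix α α ℝ} {c : ℝ}
    (h : (c • (F + Fᵀ)).PosDef) : IsUnit F.det := by
  rw [isUnit_iff_ne_zero]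
  intro hdet
  obtain ⟨v, hv, hFv⟩ := exists_mulVec_eq_zero_iff.mpr hdet
  have hpos := h.dotProduct_mulVec_pos hv
  rw [star_trivial, smul_mulVec, dotProduct_smul, add_mulVec, dotProduct_add, hFv,
    dotProduct_mulVec v Fᵀ, vecMul_transpose, hFv] at hpos
  simp at hpos

theorem vnorm_eq_norm_sqrt_mulVec {H : Matrix α α ℝ} (hH : H.PosSemidef) (u : α → ℝ) :
    vnorm H u = ‖WithLp.toLp 2 (CFC.sqrt H *ᵥ u)‖ := by
  have hsq : u ⬝ᵥ H *ᵥ u = (CFC.sqrt H *ᵥ u) ⬝ᵥ (CFC.sqrt H *ᵥ u) := by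
    conv_lhs => rw [← CFC.sqrt_mul_sqrt_self H hH.nonneg, ← mulVec_mulVec, dotProduct_mulVec,
      ← mulVec_transpose, transpose_sqrt]
  rw [vnorm, EuclideanSpace.norm_eq, hsq]
  simp [dotProduct, sq]

theorem wnorm_eq_l2_opNorm {H1 : Matrix α α ℝ} {H2 : Matrix β β ℝ} (h1 : H1.PosDef)
    (h2 : H2.PosSemidef) (M : Matrix β α ℝ) :
    wnorm H1 H2 M = ‖CFC.sqrt H2 * M * (CFC.sqrt H1)⁻¹‖ := by
  set S := CFC.sqrt H1
  set A := CFC.sqrt H2 * M * S⁻¹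
  have hS : IsUnit S.det := h1.isUnit_det_sqrt
  have hA : ∀ v, CFC.sqrt H2 *ᵥ (M *ᵥ v) = A *ᵥ (S *ᵥ v) := fun v ↦ by
    simp only [A, mulVec_mulVec, nonsing_inv_mul_cancel_right _ _ hS]
  rw [l2_opNorm_def, ContinuousLinearMap.opNorm_eq_sSup_div, wnorm]
  congr 1
  ext r
  constructor
  · rintro ⟨v, hv, rfl⟩
    refine ⟨WithLp.toLp 2 (S *ᵥ v), ?_, ?_⟩
    · simpa using (mulVec_injective_iff_isUnit.mpr ((isUnit_iff_isUnit_det S).mpr hS)).ne hv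
    · rw [vnorm_eq_norm_sqrt_mulVec h2, vnorm_eq_norm_sqrt_mulVec h1.posSemidef, hA]
      rfl
  · rintro ⟨x, hx, rfl⟩
    have hSx : S *ᵥ (S⁻¹ *ᵥ x.ofLp) = x.ofLp := by
      rw [mulVec_mulVec, mul_nonsing_inv _ hS, one_mulVec]
    refine ⟨S⁻¹ *ᵥ x.ofLp, fun h0 ↦ hx ?_, ?_⟩
    · simpa [h0] using hSx.symm
    · rw [vnorm_eq_norm_sqrt_mulVec h2, vnorm_eq_norm_sqrt_mulVec h1.posSemidef, hA, hSx]
      rfl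

variable {H1 : Matrix α α ℝ} {H2 : Matrix β β ℝ} {H3 : Matrix γ γ ℝ}

theorem vnorm_mulVec_le_wnorm_mul (h1 : H1.PosDef) (h2 : H2.PosSemidef) (M : Matrix β α ℝ)
    (v : α → ℝ) : vnorm H2 (M *ᵥ v) ≤ wnorm H1 H2 M * vnorm H1 v := by
  have hv : CFC.sqrt H2 *ᵥ (M *ᵥ v) =
      (CFC.sqrt H2 * M * (CFC.sqrt H1)⁻¹) *ᵥ (CFC.sqrt H1 *ᵥ v) := by
    rw [mulVec_mulVec, mulVec_mulVec, nonsing_inv_mul_cancel_right _ _ h1.isUnit_det_sqrt]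
  rw [wnorm_eq_l2_opNorm h1 h2, vnorm_eq_norm_sqrt_mulVec h2,
    vnorm_eq_norm_sqrt_mulVec h1.posSemidef, hv]
  exact l2_opNorm_mulVec (CFC.sqrt H2 * M * (CFC.sqrt H1)⁻¹) (WithLp.toLp 2 (CFC.sqrt H1 *ᵥ v))

theorem wnorm_add_le (h1 : H1.PosDef) (h2 : H2.PosSemidef) (A B : Matrix β α ℝ) :
    wnorm H1 H2 (A + B) ≤ wnorm H1 H2 A + wnorm H1 H2 B := by
  simp only [wnorm_eq_l2_opNorm h1 h2, Matrix.mul_add, Matrix.add_mul]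
  exact norm_add_le _ _

theorem wnorm_mul_le (h1 : H1.PosDef) (h2 : H2.PosDef) (h3 : H3.PosSemidef)
    (A : Matrix γ β ℝ) (B : Matrix β α ℝ) :
    wnorm H1 H3 (A * B) ≤ wnorm H2 H3 A * wnorm H1 H2 B := by
  rw [wnorm_eq_l2_opNorm h1 h3, wnorm_eq_l2_opNorm h2 h3, wnorm_eq_l2_opNorm h1 h2.posSemidef]
  calc _ = ‖(CFC.sqrt H3 * A * (CFC.sqrt H2)⁻¹) * (CFC.sqrt H2 * B * (CFC.sqrt H1)⁻¹)‖ := by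
        simp only [Matrix.mul_assoc, nonsing_inv_mul_cancel_left _ _ h2.isUnit_det_sqrt]
    _ ≤ _ := l2_opNorm_mul _ _

theorem wnorm_mul_sub_transpose_mul_le {H : Matrix α α ℝ} (hH : H.PosDef) (A : Matrix α α ℝ) :
    wnorm H H⁻¹ (H * A - Aᵀ * H) ≤ 2 * wnorm H H A := by
  rw [wnorm_eq_l2_opNorm hH hH.inv.posSemidef, wnorm_eq_l2_opNorm hH hH.posSemidef,
    ← hH.posSemidef.inv_sqrt]
  set S := CFC.sqrt H
  have hS : IsUnit S.det := hH.isUnit_det_sqrt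
  have hSS : S * S = H := CFC.sqrt_mul_sqrt_self H hH.posSemidef.nonneg
  have hST : Sᵀ = S := transpose_sqrt H
  have hskew : S⁻¹ * (H * A - Aᵀ * H) * S⁻¹ = S * A * S⁻¹ - (S * A * S⁻¹)ᵀ := by
    rw [← hSS, transpose_mul, transpose_mul, transpose_nonsing_inv, hST]
    simp only [Matrix.mul_sub, Matrix.sub_mul, Matrix.mul_assoc,
      nonsing_inv_mul_cancel_left _ _ hS, mul_nonsing_inv _ hS, Matrix.mul_one]
  rw [hskew, two_mul]
  calc _ ≤ ‖S * A * S⁻¹‖ + ‖(S * A * S⁻¹)ᵀ‖ := norm_sub_le _ _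
    _ = _ := by rw [← conjTranspose_eq_transpose_of_trivial, l2_opNorm_conjTranspose]

omit [DecidableEq β] in
theorem wnorm_fromBlocks_zero_le (h1 : H1.PosDef) (h2 : H2.PosSemidef) (X : Matrix α α ℝ) :
    wnorm (fromBlocks H1 0 0 H2) (fromBlocks H1 0 0 H2) (fromBlocks X 0 0 0) ≤
      wnorm H1 H1 X := by
  refine Real.sSup_le ?_ (wnorm_nonneg _ _ _)
  rintro r ⟨v, -, rfl⟩
  rw [← Sum.elim_comp_inl_inr v]
  set a := v ∘ Sum.inl
  set b := v ∘ Sum.inr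
  have hnum : vnorm (fromBlocks H1 0 0 H2) (fromBlocks X 0 0 0 *ᵥ Sum.elim a b) =
      vnorm H1 (X *ᵥ a) := by
    simp [fromBlocks_mulVec, vnorm]
  have hden : vnorm H1 a ≤ vnorm (fromBlocks H1 0 0 H2) (Sum.elim a b) := by
    rw [vnorm_fromBlocks_sumElim, vnorm]
    have hb := h2.dotProduct_mulVec_nonneg b
    rw [star_trivial] at hb
    exact Real.sqrt_le_sqrt (le_add_of_nonneg_right hb)
  rw [hnum]
  refine div_le_of_le_mul₀ (Real.sqrt_nonneg _) (wnorm_nonneg _ _ _) ?_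
  calc vnorm H1 (X *ᵥ a) ≤ wnorm H1 H1 X * vnorm H1 a :=
        vnorm_mulVec_le_wnorm_mul h1 h1.posSemidef X a
    _ ≤ _ := by gcongr; exact wnorm_nonneg _ _ _

end Matrix

theorem stmt_17_general
    {n m : ℕ} (F : Matrix (Fin n) (Fin n) ℝ) (B : Matrix (Fin m) (Fin n) ℝ)
    (H1 : Matrix (Fin n) (Fin n) ℝ) (H2 : Matrix (Fin m) (Fin m) ℝ)
    (hH1 : H1 = ((1 : ℝ)/2) • (F + Fᵀ))
    (hH1pd : H1.PosDef) (hH2pd : H2.PosDef)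
    (η C₃ : ℝ)
    (P₁ : Matrix (Fin n) (Fin n) ℝ) (hP₁ : IsUnit P₁.det)
    (hP1F : wnorm H1 H1 (P₁⁻¹ * F - 1) ≤ C₃ * η)
    (K MU MUt H : Matrix (Fin n ⊕ Fin m) (Fin n ⊕ Fin m) ℝ)
    (hMU : MU = fromBlocks F Bᵀ 0 H2)
    (hMUt : MUt = fromBlocks P₁ Bᵀ 0 H2)
    (hH : H = fromBlocks H1 0 0 H2) :
    wnorm H H⁻¹ (H * (MUt⁻¹ * K) - (MUt⁻¹ * K)ᵀ * H) ≤
      wnorm H H⁻¹ (H * (MU⁻¹ * K) - (MU⁻¹ * K)ᵀ * H) +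
        2 * C₃ * η * wnorm H H (MU⁻¹ * K) := by
  have hHpd : H.PosDef := hH ▸ hH1pd.fromBlocks_zero hH2pd
  have hH2det : IsUnit H2.det := isUnit_iff_ne_zero.mpr hH2pd.det_pos.ne'
  have hMUdet : IsUnit MU.det := by
    rw [hMU, det_fromBlocks_zero₂₁]
    exact (isUnit_det_of_posDef_smul_add_transpose (hH1 ▸ hH1pd)).mul hH2det
  set G := MU⁻¹ * K
  set D : Matrix (Fin n ⊕ Fin m) (Fin n ⊕ Fin m) ℝ := fromBlocks (P₁⁻¹ * F - 1) 0 0 0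
  have hGt : MUt⁻¹ * K = G + D * G := by
    calc MUt⁻¹ * K = MUt⁻¹ * MU * G := by
          rw [Matrix.mul_assoc, mul_nonsing_inv_cancel_left _ _ hMUdet]
      _ = (1 + D) * G := by
          rw [hMUt, hMU, inv_fromBlocks_zero₂₁_mul_fromBlocks_zero₂₁ _ hP₁ hH2det, ← fromBlocks_one,
            fromBlocks_add]
          simp
      _ = G + D * G := by rw [Matrix.add_mul, Matrix.one_mul]
  have hD : wnorm H H D ≤ C₃ * η := by
    rw [hH]
    exact (wnorm_fromBlocks_zero_le hH1pd hH2pd.posSemidef _).trans hP1F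
  calc wnorm H H⁻¹ (H * (MUt⁻¹ * K) - (MUt⁻¹ * K)ᵀ * H)
      = wnorm H H⁻¹ ((H * G - Gᵀ * H) + (H * (D * G) - (D * G)ᵀ * H)) := by
        rw [hGt, transpose_add]
        congr 1
        noncomm_ring
    _ ≤ wnorm H H⁻¹ (H * G - Gᵀ * H) + 2 * wnorm H H (D * G) := by
        grw [wnorm_add_le hHpd hHpd.inv.posSemidef, wnorm_mul_sub_transpose_mul_le hHpd (D * G)]
    _ ≤ wnorm H H⁻¹ (H * G - Gᵀ * H) + 2 * (C₃ * η * wnorm H H G) := by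
        grw [wnorm_mul_le hHpd hHpd hHpd.posSemidef, hD]
        exact wnorm_nonneg _ _ _
    _ = _ := by ring

theorem stmt_17
    {n m : ℕ} (F : Matrix (Fin n) (Fin n) ℝ) (B : Matrix (Fin m) (Fin n) ℝ)
    (H1 N : Matrix (Fin n) (Fin n) ℝ) (H2 : Matrix (Fin m) (Fin m) ℝ)
    (hH1 : H1 = ((1 : ℝ)/2) • (F + Fᵀ)) (hN : N = ((1 : ℝ)/2) • (F - Fᵀ))
    (hH1pd : H1.PosDef) (hH2pd : H2.PosDef)
    (hBrank : B.rank = m)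
    (η C₃ : ℝ) (hη : 0 < η) (hC3 : 0 < C₃)
    (P₁ : Matrix (Fin n) (Fin n) ℝ) (hP₁ : IsUnit P₁.det)
    (hP1F : wnorm H1 H1 (P₁⁻¹ * F - 1) ≤ C₃ * η)
    (K MU MUt H : Matrix (Fin n ⊕ Fin m) (Fin n ⊕ Fin m) ℝ)
    (hK : K = fromBlocks F Bᵀ B 0)
    (hMU : MU = fromBlocks F Bᵀ 0 H2)
    (hMUt : MUt = fromBlocks P₁ Bᵀ 0 H2)
    (hH : H = fromBlocks H1 0 0 H2) :
    wnorm H H⁻¹ (H * (MUt⁻¹ * K) - (MUt⁻¹ * K)ᵀ * H) ≤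
      wnorm H H⁻¹ (H * (MU⁻¹ * K) - (MU⁻¹ * K)ᵀ * H) +
        2 * C₃ * η * wnorm H H (MU⁻¹ * K) :=
  stmt_17_general F B H1 H2 hH1 hH1pd hH2pd η C₃ P₁ hP₁ hP1F K MU MUt H hMU hMUt hH
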